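/- Iterated Hardy inequality in ℝ^d: for every d ≥ 1, n ∈ ℕ, and u ∈ C_0^∞({x ∈ ℝ^d : |x| > exp^{(n)}(0)}), ∫ |∇u|² dx ≥ ∫ ( (d-2)²/(4|x|²) + 1/(4|x|²(ln|x|)²) + ... + 1/(4|x|²(ln|x|)²···(ln^{(n)}|x|)²) ) |u(x)|² dx. -/

import Mathlib

open MeasureTheory Set

/-- The iterated-logarithm Hardy weight in `ℝ^d`:
`(d-2)²/(4|x|²) + 1/(4|x|²(ln|x|)²) + ⋯ + 1/(4|x|²(ln|x|)²⋯(ln^{(n)}|x|)²)`,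
where `ln^{(j)}` denotes the `j`-fold iterated logarithm. -/
noncomputable def iterHardyWeightD (d n : ℕ) (r : ℝ) : ℝ :=
  ((d : ℝ) - 2) ^ 2 / (4 * r ^ 2)
    + ∑ k ∈ Finset.range n,
        1 / (4 * r ^ 2 * ∏ j ∈ Finset.range (k + 1), (Real.log^[j + 1] r) ^ 2)

open scoped RealInnerProductSpace Topology

namespace IterHardy

/-! ### One-dimensional auxiliary functions -/

/-- `itP m r = ∏_{j<m} ln^{(j)} r` (with `ln^{(0)} r = r`). -/
noncomputable def itP (m : ℕ) (r : ℝ) : ℝ := ∏ j ∈ Finset.range m, Real.log^[j] r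

/-- The logarithmic derivative of the Hardy ground state. -/
noncomputable def hF (d n : ℕ) (r : ℝ) : ℝ :=
  -((d : ℝ) - 2) / (2 * r) + ∑ k ∈ Finset.range n, (2 * itP (k + 2) r)⁻¹

/-- Derivative of `hF`. -/
noncomputable def hF' (d n : ℕ) (r : ℝ) : ℝ :=
  ((d : ℝ) - 2) / (2 * r ^ 2)
    - ∑ k ∈ Finset.range n,
        (2 * itP (k + 2) r)⁻¹ * ∑ j ∈ Finset.range (k + 2), (itP (j + 1) r)⁻¹

noncomputable def hC (d n : ℕ) (r : ℝ) : ℝ := hF d n r / r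

noncomputable def hC' (d n : ℕ) (r : ℝ) : ℝ := hF' d n r / r - hF d n r / r ^ 2

lemma exp_iter_nonneg (m : ℕ) : 0 ≤ Real.exp^[m] 0 := by
  cases m with
  | zero => simp
  | succ m => rw [Function.iterate_succ_apply']; exact (Real.exp_pos _).le

lemma exp_iter_pos (m : ℕ) (hm : m ≠ 0) : 0 < Real.exp^[m] 0 := by
  obtain ⟨k, rfl⟩ := Nat.exists_eq_succ_of_ne_zero hm
  rw [Function.iterate_succ_apply']; exact Real.exp_pos _

lemma itlog_gt {n : ℕ} {r : ℝ} (hr : Real.exp^[n] 0 < r) :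
    ∀ j, j ≤ n → Real.exp^[n - j] 0 < Real.log^[j] r := by
  intro j
  induction j with
  | zero => intro _; simpa using hr
  | succ j ih =>
    intro hj
    have hj' : j ≤ n := Nat.le_of_succ_le hj
    have h1 := ih hj'
    have hnj : n - j = (n - (j + 1)) + 1 := by omega
    have hpos : 0 < Real.exp^[n - j] 0 := exp_iter_pos _ (by omega)
    rw [Function.iterate_succ_apply']
    have h2 : Real.log (Real.exp^[n - j] 0) < Real.log (Real.log^[j] r) :=
      Real.log_lt_log hpos h1
    rwa [hnj, Function.iterate_succ_apply', Real.log_exp] at h2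

lemma itlog_pos {n : ℕ} {r : ℝ} (hr : Real.exp^[n] 0 < r) {j : ℕ} (hj : j ≤ n) :
    0 < Real.log^[j] r :=
  lt_of_le_of_lt (exp_iter_nonneg _) (itlog_gt hr j hj)

lemma r_pos {n : ℕ} {r : ℝ} (hr : Real.exp^[n] 0 < r) : 0 < r := by
  simpa using itlog_pos hr (Nat.zero_le n)

lemma itP_pos {n : ℕ} {r : ℝ} (hr : Real.exp^[n] 0 < r) {m : ℕ} (hm : m ≤ n + 1) :
    0 < itP m r := by
  refine Finset.prod_pos fun j hj => itlog_pos hr ?_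
  have := Finset.mem_range.1 hj; omega

lemma itP_succ_eq (m : ℕ) (r : ℝ) : itP (m + 1) r = itP m r * Real.log^[m] r := by
  unfold itP; rw [Finset.prod_range_succ]

lemma hasDerivAt_itlog {n : ℕ} {r : ℝ} (hr : Real.exp^[n] 0 < r) :
    ∀ m, m ≤ n → HasDerivAt (Real.log^[m]) (itP m r)⁻¹ r := by
  intro m
  induction m with
  | zero =>
    intro _
    simpa [itP] using hasDerivAt_id r
  | succ m ih =>
    intro hm
    have hm' : m ≤ n := Nat.le_of_succ_le hm
    have h1 := ih hm'
    have hpos : 0 < Real.log^[m] r := itlog_pos hr hm'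
    have h2 := (Real.hasDerivAt_log hpos.ne').comp r h1
    rw [Function.iterate_succ' Real.log m]
    refine HasDerivAt.congr_deriv h2 ?_
    rw [itP_succ_eq, mul_inv, mul_comm]

lemma hasDerivAt_itP {n : ℕ} {r : ℝ} (hr : Real.exp^[n] 0 < r) :
    ∀ m, m ≤ n + 1 →
      HasDerivAt (itP m) (itP m r * ∑ j ∈ Finset.range m, (itP (j + 1) r)⁻¹) r := by
  intro m
  induction m with
  | zero =>
    intro _
    rw [show itP 0 = fun _ => 1 from funext fun s => by simp [itP]]; simpa using hasDerivAt_const r (1 : ℝ)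
  | succ m ih =>
    intro hm
    have hm' : m ≤ n + 1 := Nat.le_of_succ_le hm
    have hmn : m ≤ n := by omega
    have h1 := ih hm'
    have h2 := hasDerivAt_itlog hr m hmn
    have h3 := h1.mul h2
    have hfun : itP (m + 1) = fun s => itP m s * Real.log^[m] s := by
      funext s; rw [itP, Finset.prod_range_succ]; rfl
    rw [hfun]
    refine HasDerivAt.congr_deriv h3 ?_
    have hPpos : 0 < itP m r := itP_pos hr hm'
    have hLpos : 0 < Real.log^[m] r := itlog_pos hr hmn
    rw [Finset.sum_range_succ]
    have hsplit : itP (m + 1) r = itP m r * Real.log^[m] r := by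
      rw [itP, Finset.prod_range_succ]; rfl
    rw [hsplit]
    field_simp

lemma hasDerivAt_hF (d n : ℕ) {r : ℝ} (hr : Real.exp^[n] 0 < r) :
    HasDerivAt (hF d n) (hF' d n r) r := by
  have hr0 : 0 < r := r_pos hr
  have h1 : HasDerivAt (fun s : ℝ => -((d : ℝ) - 2) / (2 * s)) (((d : ℝ) - 2) / (2 * r ^ 2)) r := by
    have h := (hasDerivAt_inv hr0.ne').const_mul (-((d : ℝ) - 2) / 2)
    have hfun : (fun s : ℝ => -((d : ℝ) - 2) / (2 * s))
        = fun s : ℝ => -((d : ℝ) - 2) / 2 * s⁻¹ := by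
      funext s; field_simp
    rw [hfun]
    refine HasDerivAt.congr_deriv h ?_
    field_simp
  have h2 : HasDerivAt (fun s => ∑ k ∈ Finset.range n, (2 * itP (k + 2) s)⁻¹)
      (∑ k ∈ Finset.range n,
        -((2 * itP (k + 2) r)⁻¹ * ∑ j ∈ Finset.range (k + 2), (itP (j + 1) r)⁻¹)) r := by
    apply HasDerivAt.fun_sum
    intro k hk
    have hk' : k + 2 ≤ n + 1 := by have := Finset.mem_range.1 hk; omega
    have hB := hasDerivAt_itP hr (k + 2) hk'
    have hBpos : 0 < itP (k + 2) r := itP_pos hr hk'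
    have h := (hB.const_mul (2 : ℝ)).inv (by positivity)
    refine HasDerivAt.congr_deriv h ?_
    field_simp
  have h3 := h1.add h2
  have hfun : hF d n = fun s : ℝ =>
      -((d : ℝ) - 2) / (2 * s) + ∑ k ∈ Finset.range n, (2 * itP (k + 2) s)⁻¹ := rfl
  rw [hfun]
  refine HasDerivAt.congr_deriv h3 ?_
  rw [hF', Finset.sum_neg_distrib, ← sub_eq_add_neg]

lemma hasDerivAt_hC (d n : ℕ) {r : ℝ} (hr : Real.exp^[n] 0 < r) :
    HasDerivAt (hC d n) (hC' d n r) r := by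
  have hr0 : 0 < r := r_pos hr
  have h := (hasDerivAt_hF d n hr).div (hasDerivAt_id r) hr0.ne'
  have hfun : hC d n = fun s : ℝ => hF d n s / s := rfl
  rw [hfun]
  refine HasDerivAt.congr_deriv h ?_
  rw [hC']; simp only [id]
  field_simp

lemma continuousAt_hC' (d n : ℕ) {r : ℝ} (hr : Real.exp^[n] 0 < r) :
    ContinuousAt (hC' d n) r := by
  have hr0 : 0 < r := r_pos hr
  have hFc : ContinuousAt (hF d n) r := (hasDerivAt_hF d n hr).continuousAt
  have hF'c : ContinuousAt (hF' d n) r := by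
    have hmain : ContinuousAt (fun s : ℝ => ∑ k ∈ Finset.range n,
        (2 * itP (k + 2) s)⁻¹ * ∑ j ∈ Finset.range (k + 2), (itP (j + 1) s)⁻¹) r := by
      apply tendsto_finset_sum
      intro k hk
      have hk' : k + 2 ≤ n + 1 := by have := Finset.mem_range.1 hk; omega
      have hBpos : 0 < itP (k + 2) r := itP_pos hr hk'
      have hBc : ContinuousAt (fun s => itP (k + 2) s) r :=
        (hasDerivAt_itP hr (k + 2) hk').continuousAt
      refine ContinuousAt.mul ((continuousAt_const.mul hBc).inv₀ (mul_ne_zero two_ne_zero hBpos.ne')) ?_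
      apply tendsto_finset_sum
      intro j hj
      have hj' : j + 1 ≤ n + 1 := by have := Finset.mem_range.1 hj; omega
      have hpos : 0 < itP (j + 1) r := itP_pos hr hj'
      exact ((hasDerivAt_itP hr (j + 1) hj').continuousAt).inv₀ hpos.ne'
    have : ContinuousAt (fun s : ℝ => ((d : ℝ) - 2) / (2 * s ^ 2)) r := by
      exact continuousAt_const.div (continuousAt_const.mul (continuousAt_id.pow 2))
        (by positivity)
    exact this.sub hmain
  exact (hF'c.div continuousAt_id hr0.ne').sub (hFc.div (continuousAt_id.pow 2)
    (by positivity))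

lemma sum_sq_aux (t : ℕ → ℝ) (n : ℕ) :
    (∑ k ∈ Finset.range n, t k) ^ 2
      - ∑ k ∈ Finset.range n, (t k * ∑ i ∈ Finset.range (k + 1), 2 * t i)
    = -∑ k ∈ Finset.range n, (t k) ^ 2 := by
  induction n with
  | zero => simp
  | succ m ih =>
    have h1 : ∑ k ∈ Finset.range (m + 1), t k = ∑ k ∈ Finset.range m, t k + t m :=
      Finset.sum_range_succ _ _
    have h2 : ∑ k ∈ Finset.range (m + 1), (t k * ∑ i ∈ Finset.range (k + 1), 2 * t i)
        = ∑ k ∈ Finset.range m, (t k * ∑ i ∈ Finset.range (k + 1), 2 * t i)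
          + t m * ∑ i ∈ Finset.range (m + 1), 2 * t i :=
      Finset.sum_range_succ _ _
    have h3 : ∑ k ∈ Finset.range (m + 1), (t k) ^ 2
        = ∑ k ∈ Finset.range m, (t k) ^ 2 + (t m) ^ 2 :=
      Finset.sum_range_succ _ _
    have h4 : ∑ i ∈ Finset.range (m + 1), 2 * t i
        = ∑ i ∈ Finset.range m, 2 * t i + 2 * t m :=
      Finset.sum_range_succ _ _
    have h5 : ∑ i ∈ Finset.range m, 2 * t i = 2 * ∑ i ∈ Finset.range m, t i := by
      rw [Finset.mul_sum]
    rw [h1, h2, h3, h4, h5]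
    linear_combination ih

lemma hardy_main_alg (d : ℕ) (r : ℝ) (t : ℕ → ℝ) (n : ℕ) :
    (((d : ℝ) - 2) / (2 * r ^ 2)
        - ∑ k ∈ Finset.range n, (t k * (r⁻¹ + ∑ i ∈ Finset.range (k + 1), 2 * t i)))
      + ((d : ℝ) - 1) / r * (-((d : ℝ) - 2) / (2 * r) + ∑ k ∈ Finset.range n, t k)
      + (-((d : ℝ) - 2) / (2 * r) + ∑ k ∈ Finset.range n, t k) ^ 2
    = -(((d : ℝ) - 2) ^ 2 / (4 * r ^ 2) + ∑ k ∈ Finset.range n, (t k) ^ 2) := by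
  have key := sum_sq_aux t n
  have hsplit : ∑ k ∈ Finset.range n, (t k * (r⁻¹ + ∑ i ∈ Finset.range (k + 1), 2 * t i))
      = (∑ k ∈ Finset.range n, t k) * r⁻¹
        + ∑ k ∈ Finset.range n, (t k * ∑ i ∈ Finset.range (k + 1), 2 * t i) := by
    simp_rw [mul_add]
    rw [Finset.sum_add_distrib, ← Finset.sum_mul]
  rw [hsplit]
  linear_combination key

lemma hardy_identity (d n : ℕ) {r : ℝ} (hr : Real.exp^[n] 0 < r) :
    hF' d n r + ((d : ℝ) - 1) / r * hF d n r + (hF d n r) ^ 2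
      = -(iterHardyWeightD d n r) := by
  have hr0 : (0 : ℝ) < r := r_pos hr
  have hsum : ∀ k ∈ Finset.range n,
      (2 * itP (k + 2) r)⁻¹ * ∑ j ∈ Finset.range (k + 2), (itP (j + 1) r)⁻¹
        = (2 * itP (k + 2) r)⁻¹
            * (r⁻¹ + ∑ i ∈ Finset.range (k + 1), 2 * (2 * itP (i + 2) r)⁻¹) := by
    intro k hk
    congr 1
    rw [Finset.sum_range_succ' (fun j => (itP (j + 1) r)⁻¹) (k + 1)]
    have h0 : (itP 1 r)⁻¹ = r⁻¹ := by simp [itP]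
    rw [h0, add_comm]
    congr 1
    refine Finset.sum_congr rfl fun j _ => ?_
    rw [mul_inv]; ring
  have hW : ∀ k ∈ Finset.range n,
      1 / (4 * r ^ 2 * ∏ j ∈ Finset.range (k + 1), (Real.log^[j + 1] r) ^ 2)
        = ((2 * itP (k + 2) r)⁻¹) ^ 2 := by
    intro k hk
    have hP : itP (k + 2) r = (∏ j ∈ Finset.range (k + 1), Real.log^[j + 1] r) * r := by
      rw [itP, Finset.prod_range_succ' (fun j => Real.log^[j] r) (k + 1)]
      rfl
    have hk' : k + 2 ≤ n + 1 := by have := Finset.mem_range.1 hk; omega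
    have hQpos : 0 < (∏ j ∈ Finset.range (k + 1), Real.log^[j + 1] r) := by
      have h1 := itP_pos hr hk'
      rw [hP] at h1
      nlinarith
    rw [Finset.prod_pow, hP]
    field_simp
    ring
  rw [hF', hF, Finset.sum_congr rfl hsum, iterHardyWeightD, Finset.sum_congr rfl hW]
  exact hardy_main_alg d r (fun i => (2 * itP (i + 2) r)⁻¹) n

/-! ### The vector field and its derivative -/

/-- Derivative of the `i`-th component of the radial vector field. -/
noncomputable def hK (d n : ℕ) (i : Fin d) (x : EuclideanSpace ℝ (Fin d)) :
    EuclideanSpace ℝ (Fin d) →L[ℝ] ℝ :=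
  hC d n ‖x‖ • EuclideanSpace.proj i
    + x i • (hC' d n ‖x‖ • (‖x‖⁻¹ • innerSL ℝ x))

/-- Derivative of `u² ⬝ (i-th component of the vector field)`. -/
noncomputable def hD (d n : ℕ) (u : EuclideanSpace ℝ (Fin d) → ℝ) (i : Fin d)
    (x : EuclideanSpace ℝ (Fin d)) : EuclideanSpace ℝ (Fin d) →L[ℝ] ℝ :=
  (u x * u x) • hK d n i x
    + (hC d n ‖x‖ * x i) • (u x • fderiv ℝ u x + u x • fderiv ℝ u x)

lemma norm_hasFDerivAt {d : ℕ} {x : EuclideanSpace ℝ (Fin d)} (hx : x ≠ 0) :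
    HasFDerivAt (fun y : EuclideanSpace ℝ (Fin d) => ‖y‖) (‖x‖⁻¹ • innerSL ℝ x) x := by
  have h1 : HasFDerivAt (fun y : EuclideanSpace ℝ (Fin d) => ‖y‖ ^ 2)
      ((2 : ℕ) • innerSL ℝ x) x := (hasStrictFDerivAt_norm_sq x).hasFDerivAt
  have hx2 : (0 : ℝ) < ‖x‖ := norm_pos_iff.2 hx
  have h2 : HasDerivAt Real.sqrt (1 / (2 * Real.sqrt (‖x‖ ^ 2))) (‖x‖ ^ 2) :=
    Real.hasDerivAt_sqrt (by positivity)
  have h3 := h2.comp_hasFDerivAt x h1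
  have hfun : (Real.sqrt ∘ fun y : EuclideanSpace ℝ (Fin d) => ‖y‖ ^ 2)
      = fun y : EuclideanSpace ℝ (Fin d) => ‖y‖ := by
    funext y; simp [Function.comp, Real.sqrt_sq (norm_nonneg y)]
  rw [hfun] at h3
  refine HasFDerivAt.congr_fderiv h3 ?_
  rw [Real.sqrt_sq (norm_nonneg x)]
  ext y
  simp only [ContinuousLinearMap.smul_apply, smul_eq_mul, nsmul_eq_mul, Nat.cast_ofNat]
  field_simp

end IterHardy

open IterHardy

set_option maxHeartbeats 1600000 in
/-- **Iterated Hardy inequality in ℝ^d**: for every `d ≥ 1`, `n ∈ ℕ`, and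
`u ∈ C_0^∞({x : |x| > exp^{(n)}(0)})`,
`∫ |∇u|² dx ≥ ∫ ((d-2)²/(4|x|²) + ⋯ + 1/(4|x|²(ln|x|)²⋯(ln^{(n)}|x|)²)) |u|² dx`. -/
theorem iterated_hardy_euclidean (d : ℕ) (hd : 1 ≤ d) (n : ℕ)
    (u : EuclideanSpace ℝ (Fin d) → ℝ)
    (hu : ContDiff ℝ (⊤ : ℕ∞) u) (hcomp : HasCompactSupport u)
    (hsupp : tsupport u ⊆ {x : EuclideanSpace ℝ (Fin d) | Real.exp^[n] 0 < ‖x‖}) :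
    ∫ x, iterHardyWeightD d n ‖x‖ * u x ^ 2 ≤ ∫ x, ‖gradient u x‖ ^ 2 := by
  classical
  have hud : Differentiable ℝ u := hu.differentiable (by simp)
  have hfdc : Continuous fun x => fderiv ℝ u x := hu.continuous_fderiv (by simp)
  have hz : ∀ x ∉ tsupport u, u x = 0 := fun x hx => image_eq_zero_of_notMem_tsupport hx
  have hopenc : IsOpen (tsupport u)ᶜ := (isClosed_tsupport u).isOpen_compl
  have hz' : ∀ x ∉ tsupport u, fderiv ℝ u x = 0 := by
    intro x hx
    have hmem : (tsupport u)ᶜ ∈ 𝓝 x := hopenc.mem_nhds hx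
    have heq : u =ᶠ[𝓝 x] fun _ => 0 := Filter.eventuallyEq_of_mem hmem fun y hy => hz y hy
    rw [heq.fderiv_eq]
    exact fderiv_const_apply 0
  have hgrad : ∀ (x v : EuclideanSpace ℝ (Fin d)), ⟪gradient u x, v⟫ = fderiv ℝ u x v := by
    intro x v
    rw [gradient]
    exact InnerProductSpace.toDual_symm_apply
  have hKcpt : IsCompact (tsupport u) := hcomp
  -- helper: continuity and integrability of functions that are nice on Ω and vanish off supp u
  have loccont : ∀ g : EuclideanSpace ℝ (Fin d) → ℝ,
      (∀ x, Real.exp^[n] 0 < ‖x‖ → ContinuousAt g x) →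
      (∀ x ∉ tsupport u, g x = 0) → Continuous g := by
    intro g hg hg0
    rw [continuous_iff_continuousAt]
    intro x
    by_cases hx : Real.exp^[n] 0 < ‖x‖
    · exact hg x hx
    · have hxs : x ∉ tsupport u := fun hmem => hx (hsupp hmem)
      have hmem : (tsupport u)ᶜ ∈ 𝓝 x := hopenc.mem_nhds hxs
      have heq : g =ᶠ[𝓝 x] fun _ => 0 := Filter.eventuallyEq_of_mem hmem fun y hy => hg0 y hy
      exact continuousAt_const.congr heq.symm
  have locint : ∀ g : EuclideanSpace ℝ (Fin d) → ℝ,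
      (∀ x, Real.exp^[n] 0 < ‖x‖ → ContinuousAt g x) →
      (∀ x ∉ tsupport u, g x = 0) → Integrable g := by
    intro g hg hg0
    exact (loccont g hg hg0).integrable_of_hasCompactSupport
      (HasCompactSupport.intro hKcpt hg0)
  -- positivity on Ω
  have hxpos : ∀ x : EuclideanSpace ℝ (Fin d), Real.exp^[n] 0 < ‖x‖ → (0 : ℝ) < ‖x‖ :=
    fun x hx => r_pos hx
  -- the derivative of the radial coefficient
  have hVder : ∀ x : EuclideanSpace ℝ (Fin d), Real.exp^[n] 0 < ‖x‖ →
      HasFDerivAt (fun y : EuclideanSpace ℝ (Fin d) => hC d n ‖y‖)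
        (hC' d n ‖x‖ • (‖x‖⁻¹ • innerSL ℝ x)) x := by
    intro x hx
    have hx0 : x ≠ 0 := by
      intro h
      rw [h, norm_zero] at hx
      exact absurd hx (not_lt.2 (exp_iter_nonneg n))
    exact (hasDerivAt_hC d n hx).comp_hasFDerivAt x (norm_hasFDerivAt hx0)
  have hViDer : ∀ (i : Fin d) (x : EuclideanSpace ℝ (Fin d)), Real.exp^[n] 0 < ‖x‖ →
      HasFDerivAt (fun y : EuclideanSpace ℝ (Fin d) => hC d n ‖y‖ * y i) (hK d n i x) x := by
    intro i x hx
    have h1 := hVder x hx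
    have h2 : HasFDerivAt (fun y : EuclideanSpace ℝ (Fin d) => y i)
        (PiLp.proj (𝕜 := ℝ) 2 (fun _ : Fin d => ℝ) i) x :=
      (PiLp.proj (𝕜 := ℝ) 2 (fun _ : Fin d => ℝ) i).hasFDerivAt
    exact h1.mul h2
  have hPhiDer : ∀ (i : Fin d) (x : EuclideanSpace ℝ (Fin d)),
      HasFDerivAt (fun y : EuclideanSpace ℝ (Fin d) => (u y * u y) * (hC d n ‖y‖ * y i))
        (hD d n u i x) x := by
    intro i x
    by_cases hx : Real.exp^[n] 0 < ‖x‖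
    · have h2 := hViDer i x hx
      have hu' := (hud x).hasFDerivAt
      exact (hu'.mul hu').mul h2
    · have hxs : x ∉ tsupport u := fun hmem => hx (hsupp hmem)
      have hmem : (tsupport u)ᶜ ∈ 𝓝 x := hopenc.mem_nhds hxs
      have heq : (fun y : EuclideanSpace ℝ (Fin d) => (u y * u y) * (hC d n ‖y‖ * y i))
          =ᶠ[𝓝 x] fun _ => (0 : ℝ) :=
        Filter.eventuallyEq_of_mem hmem fun y hy => by simp [hz y hy]
      have h0 : HasFDerivAt (fun _ : EuclideanSpace ℝ (Fin d) => (0 : ℝ))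
          (0 : EuclideanSpace ℝ (Fin d) →L[ℝ] ℝ) x := hasFDerivAt_const 0 x
      have hD0 : hD d n u i x = 0 := by
        simp [hD, hz x hxs]
      rw [hD0]
      exact h0.congr_of_eventuallyEq heq
  -- applying hD to basis vectors
  have hDapply : ∀ (i : Fin d) (x : EuclideanSpace ℝ (Fin d)),
      hD d n u i x (EuclideanSpace.single i (1 : ℝ))
        = (u x * u x) * (hC d n ‖x‖ + x i * (hC' d n ‖x‖ * (‖x‖⁻¹ * x i)))
          + (hC d n ‖x‖ * x i)
              * (2 * (u x * fderiv ℝ u x (EuclideanSpace.single i (1 : ℝ)))) := by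
    intro i x
    have hp : (EuclideanSpace.proj i) (EuclideanSpace.single i (1 : ℝ)) = 1 := by
      simp [PiLp.proj_apply, EuclideanSpace.single_apply]
    have hi : (innerSL ℝ x) (EuclideanSpace.single i (1 : ℝ)) = x i := by
      simp [innerSL_apply_apply, EuclideanSpace.inner_single_right]
    simp only [hD, hK, ContinuousLinearMap.add_apply, ContinuousLinearMap.smul_apply,
      smul_eq_mul, hp, hi]
    ring
  -- integrability of each ibp integrand
  have hDint : ∀ i : Fin d,
      Integrable fun x => hD d n u i x (EuclideanSpace.single i (1 : ℝ)) := by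
    intro i
    have hfun : (fun x => hD d n u i x (EuclideanSpace.single i (1 : ℝ)))
        = fun x => (u x * u x) * (hC d n ‖x‖ + x i * (hC' d n ‖x‖ * (‖x‖⁻¹ * x i)))
          + (hC d n ‖x‖ * x i)
              * (2 * (u x * fderiv ℝ u x (EuclideanSpace.single i (1 : ℝ)))) :=
      funext (hDapply i)
    rw [hfun]
    apply locint
    · intro x hx
      have hnc : ContinuousAt (fun y : EuclideanSpace ℝ (Fin d) => ‖y‖) x :=
        continuous_norm.continuousAt
      have hCc : ContinuousAt (fun y : EuclideanSpace ℝ (Fin d) => hC d n ‖y‖) x :=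
        ((hasDerivAt_hC d n hx).continuousAt).comp hnc
      have hC'c : ContinuousAt (fun y : EuclideanSpace ℝ (Fin d) => hC' d n ‖y‖) x :=
        (continuousAt_hC' d n hx).comp hnc
      have hinv : ContinuousAt (fun y : EuclideanSpace ℝ (Fin d) => ‖y‖⁻¹) x :=
        hnc.inv₀ (hxpos x hx).ne'
      have hcoord : ContinuousAt (fun y : EuclideanSpace ℝ (Fin d) => y i) x :=
        (EuclideanSpace.proj i).continuous.continuousAt
      have hfda : ContinuousAt
          (fun y => fderiv ℝ u y (EuclideanSpace.single i (1 : ℝ))) x :=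
        (hfdc.clm_apply continuous_const).continuousAt
      have huc : ContinuousAt u x := hu.continuous.continuousAt
      exact ((huc.mul huc).mul (hCc.add (hcoord.mul (hC'c.mul (hinv.mul hcoord))))).add
        ((hCc.mul hcoord).mul (continuousAt_const.mul (huc.mul hfda)))
    · intro x hx
      simp [hz x hx]
  -- integration by parts: each integral vanishes
  have hibp : ∀ i : Fin d,
      ∫ x, hD d n u i x (EuclideanSpace.single i (1 : ℝ)) = 0 := by
    intro i
    have hdiff : Differentiable ℝ
        (fun y : EuclideanSpace ℝ (Fin d) => (u y * u y) * (hC d n ‖y‖ * y i)) :=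
      fun x => (hPhiDer i x).differentiableAt
    have hfder : ∀ x, fderiv ℝ
        (fun y : EuclideanSpace ℝ (Fin d) => (u y * u y) * (hC d n ‖y‖ * y i)) x
          = hD d n u i x := fun x => (hPhiDer i x).fderiv
    have h := integral_mul_fderiv_eq_neg_fderiv_mul_of_integrable
      (μ := (volume : Measure (EuclideanSpace ℝ (Fin d))))
      (f := fun _ : EuclideanSpace ℝ (Fin d) => (1 : ℝ))
      (g := fun y : EuclideanSpace ℝ (Fin d) => (u y * u y) * (hC d n ‖y‖ * y i))
      (v := EuclideanSpace.single i (1 : ℝ))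
      ?_ ?_ ?_ (fun x _ => (differentiable_const (1 : ℝ)) x) (fun x _ => hdiff x)
    · simp only [one_mul, hfder] at h
      rw [h]
      have : ∀ x : EuclideanSpace ℝ (Fin d),
          fderiv ℝ (fun _ : EuclideanSpace ℝ (Fin d) => (1 : ℝ)) x
            (EuclideanSpace.single i (1 : ℝ)) * ((u x * u x) * (hC d n ‖x‖ * x i)) = 0 := by
        intro x
        rw [fderiv_const_apply]
        simp
      simp only [this, integral_zero, neg_zero]
    · have : ∀ x : EuclideanSpace ℝ (Fin d),
          fderiv ℝ (fun _ : EuclideanSpace ℝ (Fin d) => (1 : ℝ)) x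
            (EuclideanSpace.single i (1 : ℝ)) * ((u x * u x) * (hC d n ‖x‖ * x i)) = 0 := by
        intro x
        rw [fderiv_const_apply]
        simp
      simp only [this]
      exact integrable_zero _ _ _
    · simp only [one_mul, hfder]
      exact hDint i
    · simp only [one_mul]
      refine (hdiff.continuous).integrable_of_hasCompactSupport
        (HasCompactSupport.intro hKcpt fun x hx => ?_)
      simp [hz x hx]
  have hsum0 : ∫ x, (∑ i, hD d n u i x (EuclideanSpace.single i (1 : ℝ))) = 0 := by
    rw [integral_finset_sum _ fun i _ => hDint i]
    simp [hibp]
  -- name the main scalar functions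
  set Bf : EuclideanSpace ℝ (Fin d) → ℝ :=
    fun x => 2 * u x * (hC d n ‖x‖ * fderiv ℝ u x x) with hBf
  set Dv : EuclideanSpace ℝ (Fin d) → ℝ :=
    fun x => (u x * u x) * (hC' d n ‖x‖ * ‖x‖ + d * hC d n ‖x‖) with hDv
  set Cf : EuclideanSpace ℝ (Fin d) → ℝ :=
    fun x => (u x * u x) * ((hC d n ‖x‖) ^ 2 * ‖x‖ ^ 2) with hCf
  -- pointwise: the divergence identity
  have hId4 : ∀ x : EuclideanSpace ℝ (Fin d),
      (∑ i, hD d n u i x (EuclideanSpace.single i (1 : ℝ))) = Bf x + Dv x := by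
    intro x
    by_cases hx : Real.exp^[n] 0 < ‖x‖
    · have hx0 : (0 : ℝ) < ‖x‖ := hxpos x hx
      have hxsum : ∑ i, (x i) ^ 2 = ‖x‖ ^ 2 := by
        rw [EuclideanSpace.norm_eq, Real.sq_sqrt (by positivity)]
        refine Finset.sum_congr rfl fun i _ => ?_
        rw [Real.norm_eq_abs, sq_abs]
      have hbase : ∑ i, x i • EuclideanSpace.single i (1 : ℝ) = x := by
        have h := (EuclideanSpace.basisFun (Fin d) ℝ).sum_repr x
        simpa [EuclideanSpace.basisFun_apply, EuclideanSpace.basisFun_repr] using h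
      have hxap : ∑ i, x i * fderiv ℝ u x (EuclideanSpace.single i (1 : ℝ))
          = fderiv ℝ u x x := by
        calc ∑ i, x i * fderiv ℝ u x (EuclideanSpace.single i (1 : ℝ))
            = ∑ i, fderiv ℝ u x (x i • EuclideanSpace.single i (1 : ℝ)) := by
              refine Finset.sum_congr rfl fun i _ => ?_
              rw [ContinuousLinearMap.map_smul, smul_eq_mul]
          _ = fderiv ℝ u x (∑ i, x i • EuclideanSpace.single i (1 : ℝ)) := by
              rw [map_sum]
          _ = fderiv ℝ u x x := by rw [hbase]
      simp only [hDapply]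
      rw [Finset.sum_add_distrib]
      have e1 : ∑ i, (u x * u x) * (hC d n ‖x‖ + x i * (hC' d n ‖x‖ * (‖x‖⁻¹ * x i)))
          = (u x * u x) * ((d : ℝ) * hC d n ‖x‖
              + hC' d n ‖x‖ * ‖x‖⁻¹ * ∑ i, (x i) ^ 2) := by
        rw [← Finset.mul_sum]
        congr 1
        rw [Finset.sum_add_distrib, Finset.sum_const, Finset.card_univ, Fintype.card_fin,
          nsmul_eq_mul, Finset.mul_sum]
        congr 1
        refine Finset.sum_congr rfl fun i _ => ?_
        ring
      have e2 : ∑ i, (hC d n ‖x‖ * x i)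
            * (2 * (u x * fderiv ℝ u x (EuclideanSpace.single i (1 : ℝ))))
          = 2 * u x * (hC d n ‖x‖ * fderiv ℝ u x x) := by
        calc ∑ i, (hC d n ‖x‖ * x i)
              * (2 * (u x * fderiv ℝ u x (EuclideanSpace.single i (1 : ℝ))))
            = ∑ i, (2 * u x * hC d n ‖x‖)
                * (x i * fderiv ℝ u x (EuclideanSpace.single i (1 : ℝ))) := by
              refine Finset.sum_congr rfl fun i _ => ?_
              ring
          _ = (2 * u x * hC d n ‖x‖)
                * ∑ i, x i * fderiv ℝ u x (EuclideanSpace.single i (1 : ℝ)) := by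
              rw [Finset.mul_sum]
          _ = 2 * u x * (hC d n ‖x‖ * fderiv ℝ u x x) := by rw [hxap]; ring
      rw [e1, e2, hxsum, hBf, hDv]
      have hinv : ‖x‖⁻¹ * ‖x‖ ^ 2 = ‖x‖ := by
        rw [pow_two]
        field_simp
      simp only []
      field_simp
      ring
    · have hxs : x ∉ tsupport u := fun hmem => hx (hsupp hmem)
      simp [hDapply, hBf, hDv, hz x hxs, hz' x hxs]
  -- integrability of the named functions
  have hBint : Integrable Bf := by
    apply locint
    · intro x hx
      have hnc : ContinuousAt (fun y : EuclideanSpace ℝ (Fin d) => ‖y‖) x :=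
        continuous_norm.continuousAt
      have hCc : ContinuousAt (fun y : EuclideanSpace ℝ (Fin d) => hC d n ‖y‖) x :=
        ((hasDerivAt_hC d n hx).continuousAt).comp hnc
      have hfda : ContinuousAt (fun y => fderiv ℝ u y y) x :=
        (hfdc.clm_apply continuous_id).continuousAt
      exact (continuousAt_const.mul hu.continuous.continuousAt).mul (hCc.mul hfda)
    · intro x hx
      simp [hBf, hz x hx]
  have hDvint : Integrable Dv := by
    apply locint
    · intro x hx
      have hnc : ContinuousAt (fun y : EuclideanSpace ℝ (Fin d) => ‖y‖) x :=
        continuous_norm.continuousAt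
      have hCc : ContinuousAt (fun y : EuclideanSpace ℝ (Fin d) => hC d n ‖y‖) x :=
        ((hasDerivAt_hC d n hx).continuousAt).comp hnc
      have hC'c : ContinuousAt (fun y : EuclideanSpace ℝ (Fin d) => hC' d n ‖y‖) x :=
        (continuousAt_hC' d n hx).comp hnc
      have huc : ContinuousAt u x := hu.continuous.continuousAt
      exact (huc.mul huc).mul ((hC'c.mul hnc).add (continuousAt_const.mul hCc))
    · intro x hx
      simp [hDv, hz x hx]
  have hCint : Integrable Cf := by
    apply locint
    · intro x hx
      have hnc : ContinuousAt (fun y : EuclideanSpace ℝ (Fin d) => ‖y‖) x :=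
        continuous_norm.continuousAt
      have hCc : ContinuousAt (fun y : EuclideanSpace ℝ (Fin d) => hC d n ‖y‖) x :=
        ((hasDerivAt_hC d n hx).continuousAt).comp hnc
      have huc : ContinuousAt u x := hu.continuous.continuousAt
      exact (huc.mul huc).mul ((hCc.pow 2).mul (hnc.pow 2))
    · intro x hx
      simp [hCf, hz x hx]
  have hgradcont : Continuous fun x => gradient u x := by
    have : Continuous fun x =>
        (InnerProductSpace.toDual ℝ (EuclideanSpace ℝ (Fin d))).symm (fderiv ℝ u x) :=
      (InnerProductSpace.toDual ℝ (EuclideanSpace ℝ (Fin d))).symm.continuous.comp hfdc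
    exact this
  have hAint : Integrable fun x => ‖gradient u x‖ ^ 2 := by
    refine ((hgradcont.norm).pow 2).integrable_of_hasCompactSupport
      (HasCompactSupport.intro hKcpt fun x hx => ?_)
    have : gradient u x = 0 := by
      rw [gradient, hz' x hx]
      simp
    simp [this]
  -- ∫ Bf = - ∫ Dv
  have hBD : ∫ x, Bf x = - ∫ x, Dv x := by
    have h1 : (fun x => ∑ i, hD d n u i x (EuclideanSpace.single i (1 : ℝ)))
        = fun x => Bf x + Dv x := funext hId4
    rw [h1, integral_add hBint hDvint] at hsum0
    linarith
  -- pointwise identity for the weight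
  have hId2 : ∀ x : EuclideanSpace ℝ (Fin d),
      iterHardyWeightD d n ‖x‖ * u x ^ 2 = -(Dv x) - Cf x := by
    intro x
    by_cases hx : Real.exp^[n] 0 < ‖x‖
    · have hx0 : (0 : ℝ) < ‖x‖ := hxpos x hx
      have hkey := hardy_identity d n hx
      have hWeq : iterHardyWeightD d n ‖x‖
          = -(hF' d n ‖x‖ + ((d : ℝ) - 1) / ‖x‖ * hF d n ‖x‖ + (hF d n ‖x‖) ^ 2) := by
        linarith
      rw [hWeq, hDv, hCf]
      simp only []
      rw [show u x ^ 2 = u x * u x from sq (u x)]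
      unfold hC hC'
      field_simp
      ring
    · have hxs : x ∉ tsupport u := fun hmem => hx (hsupp hmem)
      simp [hDv, hCf, hz x hxs]
  -- pointwise nonnegativity
  have hId3 : ∀ x : EuclideanSpace ℝ (Fin d),
      0 ≤ ‖gradient u x‖ ^ 2 - Bf x + Cf x := by
    intro x
    set w : EuclideanSpace ℝ (Fin d) := u x • (hC d n ‖x‖ • x) with hw
    have hsq : ‖gradient u x - w‖ ^ 2
        = ‖gradient u x‖ ^ 2 - 2 * ⟪gradient u x, w⟫ + ‖w‖ ^ 2 :=
      norm_sub_sq_real _ _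
    have hw1 : ⟪gradient u x, w⟫ = u x * (hC d n ‖x‖ * fderiv ℝ u x x) := by
      rw [hw, real_inner_smul_right, real_inner_smul_right, hgrad]
    have hw2 : ‖w‖ ^ 2 = (u x * u x) * ((hC d n ‖x‖) ^ 2 * ‖x‖ ^ 2) := by
      rw [hw, norm_smul, norm_smul, Real.norm_eq_abs, Real.norm_eq_abs]
      rw [mul_pow, mul_pow, sq_abs, sq_abs]
      ring
    have hBfx : Bf x = 2 * (u x * (hC d n ‖x‖ * fderiv ℝ u x x)) := by
      rw [hBf]; ring
    have hCfx : Cf x = (u x * u x) * ((hC d n ‖x‖) ^ 2 * ‖x‖ ^ 2) := by rw [hCf]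
    have hnn : (0 : ℝ) ≤ ‖gradient u x - w‖ ^ 2 := sq_nonneg _
    rw [hsq, hw1, hw2] at hnn
    rw [hBfx, hCfx]
    linarith
  -- final assembly
  have hgoal1 : (fun x => iterHardyWeightD d n ‖x‖ * u x ^ 2)
      = fun x => -(Dv x) - Cf x := funext hId2
  have hDvint' : Integrable fun x => -Dv x := hDvint.neg
  rw [hgoal1, integral_sub hDvint' hCint, integral_neg]
  have h5 : 0 ≤ ∫ x, (‖gradient u x‖ ^ 2 - Bf x + Cf x) := integral_nonneg hId3
  have hABint : Integrable fun x => ‖gradient u x‖ ^ 2 - Bf x := hAint.sub hBint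
  rw [integral_add hABint hCint, integral_sub hAint hBint] at h5
  linarith [hBD, h5]
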